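/- In the Neyman–Scott model with Jeffreys' prior π_J(θ₁,…,θ_n, σ²) ∝ (σ²)^{-n/2 − 1}, the marginal posterior of σ² is proportional to (σ²)^{-nk/2 − 1} exp[−n(k−1)S/(2σ²)], whose mean n(k−1)S/(nk−2) converges in probability to (k−1)σ²/k as n → ∞; hence the posterior mean under Jeffreys' prior is an inconsistent estimator of σ². -/

import Mathlib

/-!
Integrating out `θᵢ` completes a square: `∑ⱼ (xᵢⱼ - t)² = Sᵢ + k (t - x̄ᵢ)²`, where `Sᵢ` is the
within-group sum of squares, so every group contributes `(2πv)^{-(k-1)/2} k^{-1/2} e^{-Sᵢ/(2v)}`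
and the Jeffreys factor `v^{-n/2-1}` turns the product into `v^{-nk/2-1} e^{-∑ Sᵢ/(2v)}`.

`Sᵢ` is unchanged when row `i` is centred at `θᵢ`, so the `Sᵢ` are i.i.d.; for a centred row `Z`,
`Sᵢ = ∑ⱼ Zⱼ² - (∑ⱼ Zⱼ)²/k` and both expectations on the right equal `kσ²`, so `E Sᵢ = (k-1)σ²`.
By the strong law, `∑_{i<n} Sᵢ / (nk - 2) → (k-1)σ²/k` almost surely, hence in probability.
-/

open MeasureTheory ProbabilityTheory Filter Real Topology Finset

noncomputable def sumSqDev {k : ℕ} (u : Fin k → ℝ) : ℝ :=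
  ∑ j, (u j - (∑ j', u j') / k) ^ 2

section SumSqDev

variable {k : ℕ}

lemma continuous_sumSqDev : Continuous (sumSqDev (k := k)) := by
  unfold sumSqDev; fun_prop

lemma sumSqDev_sub_const (u : Fin k → ℝ) (c : ℝ) :
    sumSqDev (fun j => u j - c) = sumSqDev u := by
  rcases eq_or_ne k 0 with rfl | hk
  · simp [sumSqDev]
  unfold sumSqDev
  refine sum_congr rfl fun j _ => ?_
  rw [sum_sub_distrib, sum_const, card_univ, Fintype.card_fin, nsmul_eq_mul]
  field_simp
  ring

lemma sum_sq_sub_eq_sumSqDev_add (hk : k ≠ 0) (u : Fin k → ℝ) (t : ℝ) :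
    ∑ j, (u j - t) ^ 2 = sumSqDev u + k * (t - (∑ j, u j) / k) ^ 2 := by
  set m := (∑ j, u j) / k
  have hdev : ∑ j, (u j - m) = 0 := by
    rw [sum_sub_distrib, sum_const, card_univ, Fintype.card_fin, nsmul_eq_mul]
    simp only [m]
    field_simp
    ring
  calc ∑ j, (u j - t) ^ 2
      = ∑ j, ((u j - m) ^ 2 - 2 * (t - m) * (u j - m) + (t - m) ^ 2) :=
        sum_congr rfl fun j _ => by ring
    _ = sumSqDev u + k * (t - m) ^ 2 := by
        rw [sum_add_distrib, sum_sub_distrib, ← mul_sum, hdev]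
        simp [sumSqDev, m]

lemma sumSqDev_eq_sum_sq_sub (hk : k ≠ 0) (u : Fin k → ℝ) :
    sumSqDev u = ∑ j, u j ^ 2 - (∑ j, u j) ^ 2 / k := by
  have := sum_sq_sub_eq_sumSqDev_add hk u 0
  simp only [sub_zero, zero_sub, neg_sq] at this
  rw [this]
  field_simp
  ring

end SumSqDev

lemma integral_prod_gaussian_density {k : ℕ} (hk : k ≠ 0) {v : ℝ} (hv : 0 < v) (a : Fin k → ℝ) :
    ∫ t : ℝ, ∏ j, (2 * π * v) ^ (-(1 / 2 : ℝ)) * exp (-(a j - t) ^ 2 / (2 * v))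
      = (2 * π * v) ^ (-((k - 1) / 2 : ℝ)) * (k : ℝ) ^ (-(1 / 2 : ℝ)) *
          exp (-sumSqDev a / (2 * v)) := by
  have h2πv : 0 < 2 * π * v := by positivity
  have hk' : (0 : ℝ) < k := by positivity
  set m := (∑ j, a j) / k
  have hintegrand : ∀ t : ℝ, ∏ j, (2 * π * v) ^ (-(1 / 2 : ℝ)) * exp (-(a j - t) ^ 2 / (2 * v))
      = (2 * π * v) ^ (-(k / 2 : ℝ)) * exp (-sumSqDev a / (2 * v)) *
          exp (-(k / (2 * v)) * (t - m) ^ 2) := fun t => by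
    rw [prod_mul_distrib, prod_const, card_univ, Fintype.card_fin, ← exp_sum, ← sum_div,
      sum_neg_distrib, sum_sq_sub_eq_sumSqDev_add hk, ← rpow_natCast, ← rpow_mul h2πv.le,
      mul_assoc ((2 * π * v) ^ (-(k / 2 : ℝ))), ← exp_add]
    congr 2
    · ring
    · simp only [m]
      field_simp
      ring
  simp_rw [hintegrand]
  rw [integral_const_mul, integral_sub_right_eq_self (fun t => exp (-(k / (2 * v)) * t ^ 2)),
    integral_gaussian, show π / (k / (2 * v)) = 2 * π * v * (k : ℝ)⁻¹ by field_simp,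
    sqrt_eq_rpow, mul_rpow h2πv.le (by positivity), inv_rpow hk'.le, ← rpow_neg hk'.le]
  have : (2 * π * v) ^ (-(k / 2 : ℝ)) * (2 * π * v) ^ (1 / 2 : ℝ) =
      (2 * π * v) ^ (-((k - 1) / 2 : ℝ)) := by
    rw [← rpow_add h2πv]
    congr 1
    ring
  rw [← this]
  ring

lemma exists_jeffreys_marginal_posterior_eq {k : ℕ} (hk : k ≠ 0) (n : ℕ) :
    ∃ c : ℝ, 0 < c ∧
      ∀ (x : Fin n → Fin k → ℝ) (v : ℝ), 0 < v →
        (∫ t : Fin n → ℝ, ∏ i, ∏ j,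
            (2 * π * v) ^ (-(1 / 2 : ℝ)) * exp (-(x i j - t i) ^ 2 / (2 * v)))
          * v ^ (-((n : ℝ) / 2) - 1)
        = c * v ^ (-((n : ℝ) * k / 2) - 1) * exp (-(∑ i, sumSqDev (x i)) / (2 * v)) := by
  refine ⟨((2 * π) ^ (-((k - 1) / 2 : ℝ)) * (k : ℝ) ^ (-(1 / 2 : ℝ))) ^ n, by positivity,
    fun x v hv => ?_⟩
  rw [integral_fin_nat_prod_volume_eq_prod
      (fun i s => ∏ j, (2 * π * v) ^ (-(1 / 2 : ℝ)) * exp (-(x i j - s) ^ 2 / (2 * v)))]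
  simp_rw [integral_prod_gaussian_density hk hv]
  rw [prod_mul_distrib, prod_mul_distrib, prod_const, prod_const, card_univ, Fintype.card_fin,
    ← exp_sum, ← sum_div, ← sum_neg_distrib, mul_rpow (by positivity) hv.le]
  have hv_pow : (v ^ (-((k - 1) / 2 : ℝ))) ^ n * v ^ (-((n : ℝ) / 2) - 1)
      = v ^ (-((n : ℝ) * k / 2) - 1) := by
    rw [← rpow_natCast, ← rpow_mul hv.le, ← rpow_add hv]
    congr 1
    ring
  rw [← hv_pow]
  ring

lemma tendsto_div_natCast_mul_sub {s : ℕ → ℝ} {L a : ℝ} (b : ℝ) (ha : a ≠ 0)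
    (h : Tendsto (fun n : ℕ => s n / n) atTop (𝓝 L)) :
    Tendsto (fun n : ℕ => s n / (n * a - b)) atTop (𝓝 (L / a)) := by
  have hden : Tendsto (fun n : ℕ => a - b / n) atTop (𝓝 a) := by
    simpa using tendsto_const_nhds.sub (tendsto_const_div_atTop_nhds_zero_nat b)
  rw [← mul_one_div]
  refine (h.mul (tendsto_const_nhds.div hden ha)).congr' ?_
  filter_upwards [eventually_ne_atTop 0] with n hn
  have hn' : (n : ℝ) ≠ 0 := Nat.cast_ne_zero.mpr hn
  change s n / n * (1 / (a - b / n)) = s n / (n * a - b)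
  rw [sub_div' hn', one_div_div, div_mul_div_comm, mul_comm (s n), mul_div_mul_left _ _ hn',
    mul_comm a]

section Sampling

variable {Ω : Type*} {mΩ : MeasurableSpace Ω} {μ : Measure Ω} {k : ℕ}

lemma integrable_sumSqDev [IsFiniteMeasure μ] (hk : k ≠ 0) {f : Fin k → Ω → ℝ}
    (hf : ∀ j, MemLp (f j) 2 μ) :
    Integrable (fun ω => sumSqDev (fun j => f j ω)) μ := by
  simp_rw [sumSqDev_eq_sum_sq_sub hk]
  exact (integrable_finsetSum _ fun j _ => (hf j).integrable_sq).sub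
    ((memLp_finsetSum _ fun j _ => hf j).integrable_sq.div_const _)

lemma integral_sumSqDev [IsProbabilityMeasure μ] (hk : k ≠ 0) {f : Fin k → Ω → ℝ} {m v : ℝ}
    (hf : ∀ j, MemLp (f j) 2 μ) (hindep : Pairwise fun i j => f i ⟂ᵢ[μ] f j)
    (hmean : ∀ j, μ[f j] = m) (hvar : ∀ j, Var[f j; μ] = v) :
    ∫ ω, sumSqDev (fun j => f j ω) ∂μ = (k - 1) * v := by
  have hsum : MemLp (∑ j, f j) 2 μ := memLp_finsetSum' _ fun j _ => hf j
  have hsq : ∀ j, ∫ ω, f j ω ^ 2 ∂μ = v + m ^ 2 := fun j => by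
    rw [← hvar j, variance_eq_sub (hf j), hmean j]; simp
  have hsum_sq : ∫ ω, (∑ j, f j ω) ^ 2 ∂μ = k * v + (k * m) ^ 2 := by
    have hvar_sum := variance_eq_sub hsum
    simp only [IndepFun.variance_sum (fun j _ => hf j) fun i _ j _ hij => hindep hij,
      Pi.pow_apply, Finset.sum_apply] at hvar_sum
    rw [integral_finsetSum _ fun j _ => (hf j).integrable one_le_two] at hvar_sum
    simp only [hvar, hmean, sum_const, card_univ, Fintype.card_fin, nsmul_eq_mul] at hvar_sum
    linarith
  simp_rw [sumSqDev_eq_sum_sq_sub hk]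
  rw [integral_sub (integrable_finsetSum _ fun j _ => (hf j).integrable_sq)
      ((memLp_finsetSum _ fun j _ => hf j).integrable_sq.div_const _),
    integral_div, integral_finsetSum _ fun j _ => (hf j).integrable_sq, hsum_sq]
  simp only [hsq, sum_const, card_univ, Fintype.card_fin, nsmul_eq_mul]
  field_simp
  ring

lemma ProbabilityTheory.iIndepFun.indepFun_row {ι κ β : Type*} [Fintype κ] [MeasurableSpace β]
    {f : ι × κ → Ω → β} (h : iIndepFun f μ) (hf : ∀ p, Measurable (f p)) {i l : ι}
    (hil : i ≠ l) :
    IndepFun (fun ω j => f (i, j) ω) (fun ω j => f (l, j) ω) μ := by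
  classical
  have hST : Disjoint ({i} ×ˢ univ : Finset (ι × κ)) ({l} ×ˢ univ) :=
    disjoint_product.mpr (Or.inl (disjoint_singleton.mpr hil))
  exact (h.indepFun_finset _ _ hST hf).comp
    (φ := fun u j => u ⟨(i, j), by simp⟩) (ψ := fun u j => u ⟨(l, j), by simp⟩)
    (measurable_pi_lambda _ fun _ => measurable_pi_apply _)
    (measurable_pi_lambda _ fun _ => measurable_pi_apply _)

lemma ae_tendsto_sum_sumSqDev_div [IsProbabilityMeasure μ] (hk : k ≠ 0) {ν : Measure ℝ}
    {Z : ℕ × Fin k → Ω → ℝ} (hmeas : ∀ p, Measurable (Z p)) (hindep : iIndepFun Z μ)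
    (hlaw : ∀ p, HasLaw (Z p) ν μ) (hν : MemLp id 2 ν) :
    ∀ᵐ ω ∂μ, Tendsto
      (fun n : ℕ => (∑ i ∈ range n, sumSqDev (fun j => Z (i, j) ω)) / (n * k - 2))
      atTop (𝓝 ((k - 1) / k * Var[id; ν])) := by
  set Y : ℕ → Ω → ℝ := fun i ω => sumSqDev (fun j => Z (i, j) ω)
  have hrow_meas : ∀ i, Measurable fun ω j => Z (i, j) ω := fun i =>
    measurable_pi_lambda _ fun _ => hmeas _
  have hrow_indep : ∀ i, iIndepFun (fun j => Z (i, j)) μ := fun i =>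
    hindep.precomp (g := fun j : Fin k => (i, j)) fun _ _ h => (Prod.mk.inj h).2
  have hrow_law : ∀ i, μ.map (fun ω j => Z (i, j) ω) = Measure.pi fun _ => ν := fun i => by
    rw [(hrow_indep i).map_fun_eq_pi_map fun j => (hmeas _).aemeasurable]
    simp_rw [(hlaw _).map_eq]
  have hident : ∀ i, IdentDistrib (Y i) (Y 0) μ μ := fun i =>
    (show IdentDistrib (fun ω j => Z (i, j) ω) (fun ω j => Z (0, j) ω) μ μ from
      ⟨(hrow_meas i).aemeasurable, (hrow_meas 0).aemeasurable, by rw [hrow_law, hrow_law]⟩).comp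
      continuous_sumSqDev.measurable
  have hpair : Pairwise fun i l => Y i ⟂ᵢ[μ] Y l := fun i l hil =>
    (hindep.indepFun_row hmeas hil).comp continuous_sumSqDev.measurable
      continuous_sumSqDev.measurable
  have hmemLp : ∀ p, MemLp (Z p) 2 μ := fun p =>
    ((hlaw p).map_eq ▸ hν).comp_of_map (hlaw p).aemeasurable
  have hEY : μ[Y 0] = (k - 1) * Var[id; ν] :=
    integral_sumSqDev hk (fun _ => hmemLp _) (fun _ _ hjl => (hrow_indep 0).indepFun hjl)
      (fun _ => (hlaw _).integral_eq) (fun _ => (hlaw _).variance_eq)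
  filter_upwards [strong_law_ae_real Y (integrable_sumSqDev hk fun _ => hmemLp _) hpair hident]
    with ω hω
  rw [hEY] at hω
  simpa [mul_div_right_comm] using tendsto_div_natCast_mul_sub 2 (Nat.cast_ne_zero.mpr hk) hω

end Sampling

/-- **Jeffreys' prior fails in the Neyman–Scott problem.**
In the Neyman–Scott model `X i j ~ N(θ i, σ²)`, `i < n`, `j < k`, with Jeffreys'
prior `π_J(θ₁,…,θ_n, σ²) ∝ (σ²)^{-n/2-1}`, the marginal posterior of `v = σ²`
(obtained by integrating the likelihood times the prior over `(θ₁,…,θ_n) ∈ ℝⁿ`)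
is proportional to `v^{-nk/2-1} exp(-n(k-1)S/(2v))`, where
`n(k-1)S = ∑ᵢ∑ⱼ(x i j - x̄ i)²`; its mean `n(k-1)S/(nk-2)` converges in
probability to `(k-1)σ²/k ≠ σ²`, so the posterior mean is inconsistent. -/
theorem neyman_scott_jeffreys_inconsistent
    {Ω : Type*} [MeasureSpace Ω] [IsProbabilityMeasure (ℙ : Measure Ω)]
    (k : ℕ) (hk : 2 ≤ k) (θ : ℕ → ℝ) (σ2 : NNReal) (hσ2 : 0 < σ2)
    (X : ℕ → Fin k → Ω → ℝ)
    (hmeas : ∀ i j, Measurable (X i j))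
    (hindep : iIndepFun (m := fun _ : ℕ × Fin k => (inferInstance : MeasurableSpace ℝ))
      (fun p ω => X p.1 p.2 ω) ℙ)
    (hdist : ∀ i j, Measure.map (X i j) ℙ = gaussianReal (θ i) σ2) :
    -- shape of the marginal posterior of σ² under Jeffreys' prior
    (∀ n : ℕ, 0 < n → ∃ c : ℝ, 0 < c ∧
      ∀ (x : Fin n → Fin k → ℝ) (v : ℝ), 0 < v →
        (∫ t : Fin n → ℝ, ∏ i, ∏ j,
            (2 * π * v) ^ (-(1 / 2 : ℝ)) * Real.exp (-(x i j - t i) ^ 2 / (2 * v)))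
          * v ^ (-((n : ℝ) / 2) - 1)
        = c * v ^ (-((n : ℝ) * k / 2) - 1) *
            Real.exp (-(∑ i, ∑ j, (x i j - (∑ j' : Fin k, x i j') / k) ^ 2) / (2 * v))) ∧
    -- the posterior mean n(k-1)S/(nk-2) is inconsistent for σ²
    TendstoInMeasure ℙ
      (fun n ω =>
        (∑ i ∈ Finset.range n, ∑ j : Fin k,
            (X i j ω - (∑ j' : Fin k, X i j' ω) / k) ^ 2) / (n * k - 2))
      atTop (fun _ => ((k : ℝ) - 1) / k * σ2) ∧
    ((k : ℝ) - 1) / k * σ2 ≠ (σ2 : ℝ) := by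
  have hk0 : k ≠ 0 := by omega
  set Z : ℕ × Fin k → Ω → ℝ := fun p ω => X p.1 p.2 ω - θ p.1
  have hZ_law : ∀ p, HasLaw (Z p) (gaussianReal 0 σ2) ℙ := fun p => by
    simpa using gaussianReal_sub_const ⟨(hmeas p.1 p.2).aemeasurable, hdist p.1 p.2⟩ (θ p.1)
  have hZ_indep : iIndepFun Z ℙ :=
    hindep.comp (fun p x => x - θ p.1) fun _ => measurable_sub_const _
  have hconv := ae_tendsto_sum_sumSqDev_div hk0 (fun p => (hmeas _ _).sub_const _) hZ_indep
    hZ_law (memLp_id_gaussianReal' 2 ENNReal.ofNat_ne_top)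
  rw [variance_id_gaussianReal] at hconv
  refine ⟨fun n _ => exists_jeffreys_marginal_posterior_eq hk0 n, ?_, ?_⟩
  · refine tendstoInMeasure_of_tendsto_ae (fun n => Measurable.aestronglyMeasurable ?_) ?_
    · fun_prop
    filter_upwards [hconv] with ω hω
    simp only [sumSqDev_sub_const] at hω
    exact hω
  · have hk' : (0 : ℝ) < k := by positivity
    have hratio : ((k : ℝ) - 1) / k < 1 := (div_lt_one hk').mpr (by linarith)
    exact (mul_lt_of_lt_one_left (by exact_mod_cast hσ2) hratio).ne
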